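/- arXiv:1710.10394 — 2 statements merged into one kernel-verified Lean document; each statement's English description precedes it below -/
import Mathlib

section
/- (Theorem 3, update locality) Let q1, q2 ≥ 1, M = q1+q2, with blocks a^k[m] = x[(k−1)M+m] (0 ≤ m < q1) and d^k[m] = x[(k−1)M+q1+m] (0 ≤ m < q2). The update signal d4 produced by the 2-tap filter S(z) = s[0] + s[1] z^{-q1} applied after the update rate converter (q1-fold upsampler, filter R_u(z)=1+z^{-1}+…+z^{-(q1−1)}, q2-fold downsampler) satisfies, for 0 ≤ m ≤ q1−1, d4^k[m] = s[0]·d[(k−1)q2 + ⌊q2 m / q1⌋] + s[1]·d[(k−1)q2 + ⌊(q2 m − q1)/q1⌋]; consequently every sample of the k-th block of a is updated only from samples of the (k−1)-th and k-th blocks of d. -/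
/-- `M`-fold upsampler: `(↑M x)[M n] = x[n]`, zero at indices not divisible by `M`. -/
noncomputable def upSample (M : ℕ) (x : ℤ → ℝ) : ℤ → ℝ :=
  fun n => if (M : ℤ) ∣ n then x (n / M) else 0

/-- `M`-fold downsampler: `(↓M x)[n] = x[M n]`. -/
def downSample (M : ℕ) (x : ℤ → ℝ) : ℤ → ℝ := fun n => x ((M : ℤ) * n)

/-- Filtering: discrete convolution with impulse response `h`. -/
noncomputable def conv (h x : ℤ → ℝ) : ℤ → ℝ := fun n => ∑ᶠ k : ℤ, h k * x (n - k)

/-- Impulse response of `R(z) = 1 + z^{-1} + … + z^{-(q−1)}`. -/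
def boxFilter (q : ℕ) : ℤ → ℝ := fun j => if 0 ≤ j ∧ j < (q : ℤ) then 1 else 0

/-!
Upsampling by `q1` followed by the box filter `R_u` is a sample-and-hold: it maps `d` to
`n ↦ d ⌊n / q1⌋`. The two-tap filter `S` then reads this held signal at `n` and `n - q1`, and
downsampling by `q2` evaluates at `n = q2 ((k-1) q1 + m)`, so the two samples of `d` are
`(k-1) q2 + ⌊q2 m / q1⌋` and `(k-1) q2 + ⌊(q2 m - q1) / q1⌋`. For `0 ≤ m < q1` these floors lie
in `[-q2, q2)`, i.e. in blocks `k-1` and `k` of `d`.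
-/

theorem conv_apply_eq_sum_of_support_subset {h : ℤ → ℝ} {s : Finset ℤ}
    (hs : Function.support h ⊆ s) (x : ℤ → ℝ) (n : ℤ) :
    conv h x n = ∑ k ∈ s, h k * x (n - k) := by
  refine finsum_eq_finsetSum_of_support_subset _ fun k hk => hs ?_
  exact Function.mem_support.mpr (left_ne_zero_of_mul (Function.mem_support.mp hk))

theorem support_boxFilter_subset (q : ℕ) :
    Function.support (boxFilter q) ⊆ Finset.Ico (0 : ℤ) q := by
  intro j hj
  by_contra hj'
  simp_all [boxFilter]

theorem upSample_eq_zero_of_not_dvd {q : ℕ} (x : ℤ → ℝ) {n : ℤ} (hn : ¬ (q : ℤ) ∣ n) :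
    upSample q x n = 0 :=
  if_neg hn

theorem upSample_mul (q : ℕ) (hq : q ≠ 0) (x : ℤ → ℝ) (n : ℤ) :
    upSample q x (q * n) = x n := by
  rw [upSample, if_pos (dvd_mul_right _ _), Int.mul_ediv_cancel_left _ (by exact_mod_cast hq)]

theorem conv_boxFilter_upSample {q : ℕ} (hq : 0 < q) (x : ℤ → ℝ) (n : ℤ) :
    conv (boxFilter q) (upSample q x) n = x (n / q) := by
  have hq' : (0 : ℤ) < q := by exact_mod_cast hq
  have hr : n % q ∈ Finset.Ico (0 : ℤ) q :=
    Finset.mem_Ico.mpr ⟨Int.emod_nonneg n hq'.ne', Int.emod_lt_of_pos n hq'⟩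
  rw [conv_apply_eq_sum_of_support_subset (support_boxFilter_subset q),
    Finset.sum_eq_single_of_mem _ hr]
  · rw [boxFilter, if_pos (Finset.mem_Ico.mp hr), one_mul,
      show n - n % q = q * (n / q) by rw [Int.emod_def]; ring, upSample_mul q hq.ne']
  · intro j hj hjr
    -- only the tap `j = n % q` meets a multiple of `q`
    refine mul_eq_zero_of_right _ (upSample_eq_zero_of_not_dvd x fun hdvd => hjr ?_)
    have hjn : j ≡ n [ZMOD q] := Int.modEq_iff_dvd.mpr hdvd
    rw [← hjn, Int.emod_eq_of_lt (Finset.mem_Ico.mp hj).1 (Finset.mem_Ico.mp hj).2]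

theorem conv_twoTap {p : ℤ} (hp : p ≠ 0) (a b : ℝ) (y : ℤ → ℝ) (n : ℤ) :
    conv (fun j => if j = 0 then a else if j = p then b else 0) y n = a * y n + b * y (n - p) := by
  have hs : Function.support (fun j : ℤ => if j = 0 then a else if j = p then b else 0)
      ⊆ ({0, p} : Finset ℤ) := by
    intro j hj
    by_contra hj'
    simp_all
  rw [conv_apply_eq_sum_of_support_subset hs, Finset.sum_pair hp.symm, if_pos rfl,
    if_neg hp, if_pos rfl, sub_zero]

theorem mul_block_add_sub_ediv (q1 q2 : ℤ) (hq1 : q1 ≠ 0) (k m c : ℤ) :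
    (q2 * (k * q1 + m) - c) / q1 = k * q2 + (q2 * m - c) / q1 := by
  rw [show q2 * (k * q1 + m) - c = (q2 * m - c) + q1 * (k * q2) by ring,
    Int.add_mul_ediv_left _ _ hq1, add_comm]

theorem neg_le_mul_sub_ediv {q1 q2 m : ℤ} (hq1 : 0 < q1) (hq2 : 0 < q2) (hm : 0 ≤ m) :
    -q2 ≤ (q2 * m - q1) / q1 := by
  rw [Int.le_ediv_iff_mul_le hq1]
  nlinarith

theorem mul_ediv_lt {q1 q2 m : ℤ} (hq1 : 0 < q1) (hq2 : 0 < q2) (hm : m < q1) :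
    q2 * m / q1 < q2 := by
  rw [Int.ediv_lt_iff_lt_mul hq1]
  nlinarith

/-- Theorem 3 (update locality): with the 2-tap update filter
`S(z) = s[0] + s[1] z^{-q1}` applied after the update rate converter
(`q1`-fold upsampler, `R_u(z) = 1 + z^{-1} + … + z^{-(q1−1)}`, `q2`-fold
downsampler), the update signal `d4` satisfies, for `0 ≤ m ≤ q1 − 1`,
`d4^k[m] = s[0]·d[(k−1)q2 + ⌊q2 m / q1⌋] + s[1]·d[(k−1)q2 + ⌊(q2 m − q1)/q1⌋]`;
consequently every sample of the `k`-th block of `a` is updated only from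
samples of the `(k−1)`-th and `k`-th blocks of `d` (the updating indices lie
in `[(k−2)q2, k q2 − 1]`). -/
theorem update_two_tap_locality (q1 q2 : ℕ) (h1 : 1 ≤ q1) (h2 : 1 ≤ q2)
    (s0 s1 : ℝ) (d : ℤ → ℝ) :
    let S : ℤ → ℝ := fun j => if j = 0 then s0 else if j = (q1 : ℤ) then s1 else 0
    let d4 : ℤ → ℝ := downSample q2 (conv S (conv (boxFilter q1) (upSample q1 d)))
    ∀ k m : ℤ, 0 ≤ m → m < (q1 : ℤ) →
      (d4 ((k - 1) * q1 + m)
          = s0 * d ((k - 1) * q2 + Int.fdiv ((q2 : ℤ) * m) q1)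
            + s1 * d ((k - 1) * q2 + Int.fdiv ((q2 : ℤ) * m - q1) q1))
      ∧ (k - 2) * q2 ≤ (k - 1) * q2 + Int.fdiv ((q2 : ℤ) * m - q1) q1
      ∧ (k - 1) * q2 + Int.fdiv ((q2 : ℤ) * m) q1 ≤ k * q2 - 1 := by
  intro S d4 k m hm hmq
  have hq1 : (0 : ℤ) < q1 := by exact_mod_cast h1
  have hq2 : (0 : ℤ) < q2 := by exact_mod_cast h2
  simp only [Int.fdiv_eq_ediv_of_nonneg _ hq1.le]
  refine ⟨?_, ?_, ?_⟩
  · have held := mul_block_add_sub_ediv q1 q2 hq1.ne' (k - 1) m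
    simp only [d4, S, downSample, conv_twoTap hq1.ne', conv_boxFilter_upSample h1]
    rw [held q1, ← sub_zero ((q2 : ℤ) * ((k - 1) * q1 + m)), held 0, sub_zero]
  · linarith [neg_le_mul_sub_ediv hq1 hq2 hm]
  · linarith [mul_ediv_lt hq1 hq2 hmq]
end

section
/- (Theorem 4 structure) Let q1, q2 ≥ 1, M = q1+q2 with gcd(M, q1) = 1. Performing the lifting update step with composite update filter U(z) = R_u(z)S(z) on a 2-channel rational filterbank is equivalent to replacing the analysis lowpass filter G_l by G_l^{new}(z) = G_l(z) + (1/q2) Σ_{r=0}^{q2−1} G_h(z^{q1/q2} W_{q2}^{q1 r}) U(z^{M/q2} W_{q2}^{M r}), where W_{q2} = exp(−2πi/q2); both systems produce identical upper-branch outputs for every input. -/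
/-- Evaluation of the FIR (Laurent polynomial) transfer function
`H(z) = Σ_k h[k] z^{-k}` at a nonzero complex `z`. -/
noncomputable def lev (h : ℤ → ℝ) (z : ℂ) : ℂ := ∑ᶠ k : ℤ, (h k : ℂ) * z ^ (-k)

/-!
Both systems are compared through noble identities. Because `gcd(M, q1) = 1`, the
expander `↑q1` commutes with the decimator `↓M`; a filter `H(z)` then moves past `↓M` as
`H(z^M)` and past `↑q1` as `H(z^{q1})`, so the update branch equals `↓M ∘ C ∘ ↑q1` where
`C = ↓q2 (U(z^M) G_h(z^{q1}))`, the last step being `↓q2 ∘ F ∘ ↑q2 = ↓q2 F`. On the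
transfer-function side, averaging `F(w ζ^r)` over the `q2`-th roots of unity `ζ^r` keeps
exactly the powers of `w` divisible by `q2`, so the sum in the formula for `G_l^{new}` is
`C(w^{q2})`. Hence `G_l^{new}` and `G_l + C` agree on `ℂˣ`, and a Laurent polynomial is
determined by its values there (independence of the characters `z ↦ z^{-k}`).
-/

open Function Pointwise

theorem finsum_comp_eq_of_support_subset_range {α β R : Type*} [AddCommMonoid R] {f : α → R}
    {g : β → α} (hg : Injective g) (hf : support f ⊆ Set.range g) :
    ∑ᶠ j, f (g j) = ∑ᶠ i, f i := by
  rw [← finsum_mem_range hg, finsum_mem_def, Set.indicator_eq_self.2 hf]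

theorem finsum_comm_of_support_subset {α β R : Type*} [AddCommMonoid R] (H : α → β → R)
    (s : Finset α) (hs : ∀ a ∉ s, ∀ b, H a b = 0) (hH : ∀ a ∈ s, (support (H a)).Finite) :
    ∑ᶠ b, ∑ᶠ a, H a b = ∑ᶠ a, ∑ᶠ b, H a b := by
  have hsupp : ∀ b, support (H · b) ⊆ s := fun b a ha => by_contra fun h => ha (hs a h b)
  rw [finsum_congr fun b => finsum_eq_sum_of_support_subset _ (hsupp b), finsum_sum_comm s _ hH]
  refine (finsum_eq_sum_of_support_subset _ fun a ha => by_contra fun h => ha ?_).symm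
  simp [hs a h]

theorem finsum_convolution_mul {R : Type*} [CommSemiring R] [NoZeroDivisors R] {f g : ℤ → R}
    (hf : (support f).Finite) (hg : (support g).Finite) (F : ℤ → R) :
    ∑ᶠ s, (∑ᶠ k, f k * g (s - k)) * F s = ∑ᶠ k, f k * ∑ᶠ l, g l * F (k + l) := by
  have hshift (k : ℤ) : (support fun s => f k * g (s - k) * F s).Finite :=
    (hg.preimage sub_left_injective.injOn).subset fun s hs =>
      right_ne_zero_of_mul (left_ne_zero_of_mul hs)
  calc ∑ᶠ s, (∑ᶠ k, f k * g (s - k)) * F s = ∑ᶠ s, ∑ᶠ k, f k * g (s - k) * F s := by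
        simp_rw [finsum_mul]
    _ = ∑ᶠ k, ∑ᶠ s, f k * g (s - k) * F s :=
        finsum_comm_of_support_subset _ hf.toFinset (fun k hk s => by simp_all)
          fun k _ => hshift k
    _ = ∑ᶠ k, f k * ∑ᶠ l, g l * F (k + l) := by
        refine finsum_congr fun k => ?_
        rw [← finsum_comp_equiv (Equiv.addLeft k), mul_finsum]
        simp [mul_assoc]

theorem conv_apply_eq_finsum_mul_sub (h x : ℤ → ℝ) (n : ℤ) :
    conv h x n = ∑ᶠ k, x k * h (n - k) := by
  rw [conv, ← finsum_comp_equiv (Equiv.subLeft n)]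
  simp [mul_comm]

theorem conv_add_left {f g : ℤ → ℝ} (hf : (support f).Finite) (hg : (support g).Finite)
    (x : ℤ → ℝ) : conv (f + g) x = conv f x + conv g x := by
  funext n
  simp only [conv, Pi.add_apply, add_mul]
  exact finsum_add_distrib (hf.subset (support_mul_subset_left _ _))
    (hg.subset (support_mul_subset_left _ _))

theorem conv_assoc {f g : ℤ → ℝ} (hf : (support f).Finite) (hg : (support g).Finite)
    (x : ℤ → ℝ) : conv f (conv g x) = conv (conv f g) x := by
  funext n
  simp only [conv, finsum_convolution_mul hf hg, sub_sub]

theorem support_conv_subset (f g : ℤ → ℝ) : support (conv f g) ⊆ support f + support g := by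
  intro n hn
  obtain ⟨k, hk⟩ : ∃ k, f k * g (n - k) ≠ 0 := by
    by_contra! h
    exact hn (finsum_eq_zero_of_forall_eq_zero h)
  exact ⟨k, left_ne_zero_of_mul hk, n - k, right_ne_zero_of_mul hk, add_sub_cancel _ _⟩

theorem support_conv_finite {f g : ℤ → ℝ} (hf : (support f).Finite) (hg : (support g).Finite) :
    (support (conv f g)).Finite :=
  (hf.add hg).subset (support_conv_subset f g)

section Multirate

variable {q : ℕ}

theorem upSample_mul_apply (hq : q ≠ 0) (x : ℤ → ℝ) (m : ℤ) : upSample q x (q * m) = x m := by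
  simp [upSample, Int.mul_ediv_cancel_left _ (Int.natCast_ne_zero.2 hq)]

theorem upSample_apply_of_not_dvd (x : ℤ → ℝ) {n : ℤ} (hn : ¬ (q : ℤ) ∣ n) :
    upSample q x n = 0 := if_neg hn

theorem upSample_downSample_apply (x : ℤ → ℝ) (n : ℤ) :
    upSample q (downSample q x) n = if (q : ℤ) ∣ n then x n else 0 := by
  simp only [upSample, downSample]
  split_ifs with h
  · rw [Int.mul_ediv_cancel' h]
  · rfl

theorem support_upSample_subset (x : ℤ → ℝ) :
    support (upSample q x) ⊆ (q * ·) '' support x := by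
  intro n hn
  by_cases h : (q : ℤ) ∣ n
  · exact ⟨n / q, by simpa [upSample, h] using hn, Int.mul_ediv_cancel' h⟩
  · exact absurd (upSample_apply_of_not_dvd x h) hn

theorem support_upSample_finite {x : ℤ → ℝ} (hx : (support x).Finite) :
    (support (upSample q x)).Finite :=
  (hx.image _).subset (support_upSample_subset x)

theorem support_downSample_finite (hq : q ≠ 0) {x : ℤ → ℝ} (hx : (support x).Finite) :
    (support (downSample q x)).Finite :=
  hx.preimage (mul_right_injective₀ (Int.natCast_ne_zero.2 hq)).injOn

theorem finsum_upSample_smul {R : Type*} [AddCommMonoid R] [Module ℝ R] (hq : q ≠ 0)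
    (x : ℤ → ℝ) (F : ℤ → R) : ∑ᶠ k, upSample q x k • F k = ∑ᶠ j, x j • F (q * j) := by
  have hsupp : support (fun k => upSample q x k • F k) ⊆ Set.range ((q : ℤ) * ·) :=
    fun k hk => (support_upSample_subset x).trans (Set.image_subset_range _ _)
      fun h0 => hk (by simp [h0])
  rw [← finsum_comp_eq_of_support_subset_range
    (mul_right_injective₀ (Int.natCast_ne_zero.2 hq)) hsupp]
  simp only [upSample_mul_apply hq]

theorem upSample_upSample {p : ℕ} (hp : p ≠ 0) (x : ℤ → ℝ) :
    upSample p (upSample q x) = upSample (p * q) x := by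
  have hp' : (0 : ℤ) < p := by positivity
  funext n
  by_cases hn : (p : ℤ) ∣ n
  · obtain ⟨m, rfl⟩ := hn
    rw [upSample_mul_apply hp]
    simp only [upSample, Nat.cast_mul,
      mul_dvd_mul_iff_left hp'.ne', Int.mul_ediv_mul_of_pos _ _ hp']
  · rw [upSample_apply_of_not_dvd _ hn, upSample_apply_of_not_dvd]
    exact fun h => hn ((dvd_mul_right (p : ℤ) q).trans (by simpa using h))

theorem downSample_downSample (p : ℕ) (x : ℤ → ℝ) :
    downSample p (downSample q x) = downSample q (downSample p x) := by
  funext n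
  simp only [downSample, mul_left_comm]

theorem upSample_downSample_comm {M : ℕ} (h : Nat.Coprime M q) (x : ℤ → ℝ) :
    upSample q (downSample M x) = downSample M (upSample q x) := by
  funext n
  have hdvd : (q : ℤ) ∣ M * n ↔ (q : ℤ) ∣ n :=
    ⟨(Nat.isCoprime_iff_coprime.2 h.symm).dvd_of_dvd_mul_left, (Dvd.dvd.mul_left · _)⟩
  simp only [upSample, downSample, hdvd]
  split_ifs with hn
  · rw [Int.mul_ediv_assoc _ hn]
  · rfl

theorem upSample_conv (hq : q ≠ 0) (h x : ℤ → ℝ) :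
    upSample q (conv h x) = conv (upSample q h) (upSample q x) := by
  funext n
  have := finsum_upSample_smul hq h fun k => upSample q x (n - k)
  simp only [smul_eq_mul] at this
  rw [conv, this]
  by_cases hn : (q : ℤ) ∣ n
  · obtain ⟨m, rfl⟩ := hn
    simp only [upSample_mul_apply hq, ← mul_sub, conv]
  · rw [upSample_apply_of_not_dvd _ hn, finsum_eq_zero_of_forall_eq_zero]
    intro j
    rw [upSample_apply_of_not_dvd x fun hd => hn (by simpa using hd.add (dvd_mul_right _ j)),
      mul_zero]

theorem conv_downSample (hq : q ≠ 0) (h x : ℤ → ℝ) :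
    conv h (downSample q x) = downSample q (conv (upSample q h) x) := by
  funext n
  have := finsum_upSample_smul hq h fun k => x (q * n - k)
  simp only [smul_eq_mul] at this
  simp only [conv, downSample, this, mul_sub]

theorem downSample_conv_upSample (hq : q ≠ 0) (h x : ℤ → ℝ) :
    downSample q (conv h (upSample q x)) = conv (downSample q h) x := by
  funext n
  have := finsum_upSample_smul hq x fun k => h (q * n - k)
  simp only [smul_eq_mul] at this
  simp only [downSample, conv_apply_eq_finsum_mul_sub, this, mul_sub]

end Multirate

theorem lev_add {f g : ℤ → ℝ} (hf : (support f).Finite) (hg : (support g).Finite) (z : ℂ) :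
    lev (f + g) z = lev f z + lev g z := by
  simp only [lev, Pi.add_apply, Complex.ofReal_add, add_mul]
  exact finsum_add_distrib
    (hf.subset fun k hk => by simpa using left_ne_zero_of_mul hk)
    (hg.subset fun k hk => by simpa using left_ne_zero_of_mul hk)

theorem lev_conv {f g : ℤ → ℝ} (hf : (support f).Finite) (hg : (support g).Finite) {z : ℂ}
    (hz : z ≠ 0) : lev (conv f g) z = lev f z * lev g z := by
  have hcast (n : ℤ) : ((conv f g n : ℝ) : ℂ) = ∑ᶠ k, (f k : ℂ) * g (n - k) := by
    rw [conv]
    exact (Complex.ofRealHom.toAddMonoidHom.map_finsum_of_injective Complex.ofReal_injective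
      _).trans (finsum_congr fun k => by simp)
  simp only [lev, hcast]
  rw [finsum_convolution_mul (f := fun k => (f k : ℂ)) (g := fun k => (g k : ℂ))
    (hf.subset fun k hk => by simpa using hk) (hg.subset fun k hk => by simpa using hk),
    finsum_mul]
  refine finsum_congr fun k => ?_
  rw [mul_finsum, mul_finsum]
  refine finsum_congr fun l => ?_
  rw [neg_add, zpow_add₀ hz]
  ring

theorem lev_upSample {q : ℕ} (hq : q ≠ 0) (h : ℤ → ℝ) (z : ℂ) :
    lev (upSample q h) z = lev h (z ^ q) := by
  have := finsum_upSample_smul hq h fun k => z ^ (-k)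
  simp only [Complex.real_smul] at this
  rw [lev, this, lev]
  simp [← zpow_natCast, ← zpow_mul]

theorem IsPrimitiveRoot.geom_sum_zpow {K : Type*} [Field K] {ζ : K} {q : ℕ}
    (hζ : IsPrimitiveRoot ζ q) (k : ℤ) :
    ∑ r ∈ Finset.range q, (ζ ^ k) ^ r = if (q : ℤ) ∣ k then (q : K) else 0 := by
  split_ifs with hk
  · simp [(hζ.zpow_eq_one_iff_dvd k).2 hk]
  · have hq : (ζ ^ k) ^ q = 1 := by
      rw [← zpow_natCast, ← zpow_mul, mul_comm, zpow_mul, zpow_natCast, hζ.pow_eq_one, one_zpow]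
    rw [geom_sum_eq (mt (hζ.zpow_eq_one_iff_dvd k).1 hk) q, hq, sub_self, zero_div]

theorem sum_lev_mul_pow {ζ : ℂ} {q : ℕ} (hζ : IsPrimitiveRoot ζ q) {f : ℤ → ℝ}
    (hf : (support f).Finite) (z : ℂ) :
    ∑ r ∈ Finset.range q, lev f (z * ζ ^ r) = q * lev (upSample q (downSample q f)) z := by
  have hterm (r : ℕ) (k : ℤ) :
      (f k : ℂ) * (z * ζ ^ r) ^ (-k) = (f k : ℂ) * z ^ (-k) * (ζ ^ (-k)) ^ r := by
    rw [mul_zpow, ← zpow_natCast, ← zpow_mul, ← zpow_natCast, ← zpow_mul, mul_comm (r : ℤ),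
      mul_assoc]
  simp only [lev, hterm]
  rw [← finsum_sum_comm _ _ fun r _ => hf.subset fun k hk => by
    simpa using left_ne_zero_of_mul (left_ne_zero_of_mul hk)]
  simp only [← Finset.mul_sum, hζ.geom_sum_zpow, upSample_downSample_apply, dvd_neg, mul_finsum]
  refine finsum_congr fun k => ?_
  split_ifs <;> simp [mul_comm]

theorem eq_of_lev_eq {f g : ℤ → ℝ} (hf : (support f).Finite) (hg : (support g).Finite)
    (h : ∀ z ≠ 0, lev f z = lev g z) : f = g := by
  classical
  let χ : ℤ → (ℂˣ →* ℂ) := fun k => (Units.coeHom ℂ).comp (zpowGroupHom (-k))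
  have hχ : Injective χ := by
    intro k l hkl
    have h2 := congrArg norm congr($hkl (Units.mk0 2 two_ne_zero))
    simp only [χ, MonoidHom.coe_comp, comp_apply, zpowGroupHom_apply, Units.coeHom_apply,
      Units.val_zpow_eq_zpow_val, Units.val_mk0, norm_zpow, Complex.norm_ofNat] at h2
    exact neg_injective (zpow_right_injective₀ two_pos (by norm_num) h2)
  set s := hf.toFinset ∪ hg.toFinset
  have hlev (e : ℤ → ℝ) (he : support e ⊆ s) (z : ℂˣ) :
      lev e z = ∑ k ∈ s, (e k : ℂ) • χ k z := by
    rw [lev, finsum_eq_sum_of_support_subset _ fun k hk =>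
      he (by simpa using left_ne_zero_of_mul hk)]
    simp [χ]
  have hcomb : ∑ k ∈ s, ((f k - g k : ℝ) : ℂ) • (χ k : ℂˣ → ℂ) = 0 := by
    funext z
    have := h z z.ne_zero
    rw [hlev f fun k hk => Finset.mem_union_left _ (hf.mem_toFinset.2 hk),
      hlev g fun k hk => Finset.mem_union_right _ (hg.mem_toFinset.2 hk)] at this
    simpa [Finset.sum_apply, sub_smul, Finset.sum_sub_distrib, sub_eq_zero] using this
  funext k
  by_cases hk : k ∈ s
  · exact sub_eq_zero.1 (by exact_mod_cast
      linearIndependent_iff'.1 ((linearIndependent_monoidHom ℂˣ ℂ).comp χ hχ) s _ hcomb k hk)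
  · simp only [s, Finset.mem_union, Set.Finite.mem_toFinset, mem_support, not_or, not_not] at hk
    rw [hk.1, hk.2]

theorem update_branch_eq {q1 q2 M : ℕ} (h1 : q1 ≠ 0) (h2 : q2 ≠ 0) (hM : M ≠ 0)
    (hcop : Nat.Coprime M q1) {gh u : ℤ → ℝ} (hgh : (support gh).Finite)
    (hu : (support u).Finite) (x : ℤ → ℝ) :
    downSample q2 (conv u (upSample q1 (downSample M (conv gh (upSample q2 x))))) =
      downSample M
        (conv (downSample q2 (conv (upSample M u) (upSample q1 gh))) (upSample q1 x)) := by
  rw [upSample_downSample_comm hcop, conv_downSample hM, upSample_conv h1, upSample_upSample h1,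
    conv_assoc (support_upSample_finite hu) (support_upSample_finite hgh), downSample_downSample,
    mul_comm q1 q2, ← upSample_upSample h2, downSample_conv_upSample h2]

theorem lev_downSample_conv_upSample {q1 q2 M : ℕ} (h1 : q1 ≠ 0) (h2 : q2 ≠ 0) (hM : M ≠ 0)
    {ζ : ℂ} (hζ : IsPrimitiveRoot ζ q2) {gh u : ℤ → ℝ} (hgh : (support gh).Finite)
    (hu : (support u).Finite) {w : ℂ} (hw : w ≠ 0) :
    lev (downSample q2 (conv (upSample M u) (upSample q1 gh))) (w ^ q2) =
      1 / q2 * ∑ r ∈ Finset.range q2,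
        lev gh (w ^ q1 * ζ ^ (q1 * r)) * lev u (w ^ M * ζ ^ (M * r)) := by
  have hu' := support_upSample_finite (q := M) hu
  have hgh' := support_upSample_finite (q := q1) hgh
  have hterm (r : ℕ) : lev gh (w ^ q1 * ζ ^ (q1 * r)) * lev u (w ^ M * ζ ^ (M * r)) =
      lev (conv (upSample M u) (upSample q1 gh)) (w * ζ ^ r) := by
    rw [lev_conv hu' hgh' (mul_ne_zero hw (pow_ne_zero _ (hζ.ne_zero h2))), lev_upSample hM,
      lev_upSample h1, mul_pow, mul_pow, ← pow_mul, ← pow_mul, mul_comm r, mul_comm r, mul_comm]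
  rw [Finset.sum_congr rfl fun r _ => hterm r, sum_lev_mul_pow hζ (support_conv_finite hu' hgh'),
    lev_upSample h2]
  field_simp

/-- Theorem 4: in a 2-channel rational filterbank (branches
`↑q1 → G_l → ↓M` and `↑q2 → G_h → ↓M`, `M = q1 + q2`, `gcd(M, q1) = 1`),
the lifting update step with composite update filter `U(z) = R_u(z) S(z)`
(detail subband upsampled by `q1`, filtered by `U`, downsampled by `q2`, and
added to the approximation subband) is equivalent to replacing `G_l` by
`G_l^{new}(z) = G_l(z) + (1/q2) Σ_{r=0}^{q2−1} G_h(z^{q1/q2} W_{q2}^{q1 r}) U(z^{M/q2} W_{q2}^{M r})`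
with `W_{q2} = exp(−2πi/q2)` (stated via the substitution `z = w^{q2}`):
both systems produce identical upper-branch outputs for every input. -/
theorem update_step_equivalent_lowpass (q1 q2 M : ℕ) (h1 : 1 ≤ q1) (h2 : 1 ≤ q2)
    (hM : M = q1 + q2) (hcop : Nat.gcd M q1 = 1)
    (gl gh u glnew : ℤ → ℝ)
    (hgl : (Function.support gl).Finite) (hgh : (Function.support gh).Finite)
    (hu : (Function.support u).Finite) (hglnew : (Function.support glnew).Finite)
    (hformula : ∀ w : ℂ, w ≠ 0 →
      lev glnew (w ^ q2) = lev gl (w ^ q2) +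
        (1 / (q2 : ℂ)) * ∑ r ∈ Finset.range q2,
          lev gh (w ^ q1 * Complex.exp (-(2 * Real.pi * Complex.I) / q2) ^ (q1 * r)) *
            lev u (w ^ M * Complex.exp (-(2 * Real.pi * Complex.I) / q2) ^ (M * r))) :
    ∀ (x : ℤ → ℝ) (n : ℤ),
      downSample M (conv gl (upSample q1 x)) n +
          downSample q2 (conv u (upSample q1 (downSample M (conv gh (upSample q2 x))))) n
        = downSample M (conv glnew (upSample q1 x)) n := by
  intro x n
  have hq1 : q1 ≠ 0 := by omega
  have hq2 : q2 ≠ 0 := by omega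
  have hM0 : M ≠ 0 := by omega
  set c := downSample q2 (conv (upSample M u) (upSample q1 gh))
  have hc : (support c).Finite := support_downSample_finite hq2
    (support_conv_finite (support_upSample_finite hu) (support_upSample_finite hgh))
  have hζ : IsPrimitiveRoot (Complex.exp (-(2 * Real.pi * Complex.I) / q2)) q2 := by
    simpa [neg_div, Complex.exp_neg] using (Complex.isPrimitiveRoot_exp q2 hq2).inv
  have hnew : glnew = gl + c := by
    refine eq_of_lev_eq hglnew ((hgl.union hc).subset (support_add _ _)) fun z hz => ?_
    obtain ⟨w, rfl⟩ := IsAlgClosed.exists_pow_nat_eq z (Nat.pos_of_ne_zero hq2)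
    have hw : w ≠ 0 := by rintro rfl; simp [zero_pow hq2] at hz
    rw [hformula w hw, lev_add hgl hc, lev_downSample_conv_upSample hq1 hq2 hM0 hζ hgh hu hw]
  rw [update_branch_eq hq1 hq2 hM0 hcop hgh hu, hnew, conv_add_left hgl hc]
  rfl
end
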